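/- For any player i ∈ {0,1} and state ω ∈ Ω, the set {p ∈ [0,1] : there exists a p-evident C-indicating event F with P_i(F | ω) ≥ p} has a maximum, and this maximum equals the maximum of the C-evidence levels of the maximally evident C-indicating events E satisfying E ∩ Π_i(ω) ≠ ∅ (the maximal value p such that player i p-believes there is common p-belief in C at ω). -/

import Mathlib

open Finset

variable {Ω : Type*}

/-- The conditional probability `P_i(E | ω) = μ(E ∩ Π_i(ω)) / μ(Π_i(ω))`,
where `part i ω` is the cell of player `i`'s information partition containing `ω`. -/
noncomputable def condP [Fintype Ω] [DecidableEq Ω] (μ : Ω → ℝ)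
    (part : Fin 2 → Ω → Finset Ω) (i : Fin 2) (E : Finset Ω) (ω : Ω) : ℝ :=
  (∑ x ∈ E ∩ part i ω, μ x) / (∑ x ∈ part i ω, μ x)

/-- `E` is `p`-evident: every player `p`-believes `E` at every state of `E`. -/
def pEvident [Fintype Ω] [DecidableEq Ω] (μ : Ω → ℝ)
    (part : Fin 2 → Ω → Finset Ω) (p : ℝ) (E : Finset Ω) : Prop :=
  ∀ i : Fin 2, ∀ ω ∈ E, p ≤ condP μ part i E ω

/-- `E` is a `p`-evident `C`-indicating event. -/
def pEvidentInd [Fintype Ω] [DecidableEq Ω] (μ : Ω → ℝ)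
    (part : Fin 2 → Ω → Finset Ω) (p : ℝ) (C E : Finset Ω) : Prop :=
  pEvident μ part p E ∧ ∀ i : Fin 2, ∀ ω ∈ E, p ≤ condP μ part i C ω

/-- `E` is the largest `p`-evident `C`-indicating event. -/
def isLargestInd [Fintype Ω] [DecidableEq Ω] (μ : Ω → ℝ)
    (part : Fin 2 → Ω → Finset Ω) (p : ℝ) (C E : Finset Ω) : Prop :=
  pEvidentInd μ part p C E ∧ ∀ F : Finset Ω, pEvidentInd μ part p C F → F ⊆ E

/-- `p` is the `C`-evidence level of `E`: the maximum `q` for which `E` is a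
`q`-evident `C`-indicating event. -/
def isEvidenceLevel [Fintype Ω] [DecidableEq Ω] (μ : Ω → ℝ)
    (part : Fin 2 → Ω → Finset Ω) (C E : Finset Ω) (p : ℝ) : Prop :=
  IsGreatest {q : ℝ | pEvidentInd μ part q C E} p

/-- `G` is the maximally evident `C`-indicating superset of `F`. -/
def isMaxEvidentSup [Fintype Ω] [DecidableEq Ω] (μ : Ω → ℝ)
    (part : Fin 2 → Ω → Finset Ω) (C F G : Finset Ω) : Prop :=
  F ⊆ G ∧ ∃ p : ℝ, isEvidenceLevel μ part C G p ∧ isLargestInd μ part p C G ∧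
    ∀ H : Finset Ω, F ⊆ H → ∀ q : ℝ, isEvidenceLevel μ part C H q → q ≤ p

/-- `E` is a maximally evident `C`-indicating event: it is the maximally evident
`C`-indicating superset of some nonempty event. -/
def isMaxEvident [Fintype Ω] [DecidableEq Ω] (μ : Ω → ℝ)
    (part : Fin 2 → Ω → Finset Ω) (C E : Finset Ω) : Prop :=
  ∃ F : Finset Ω, F.Nonempty ∧ isMaxEvidentSup μ part C F E

/-- `E` is a super-`p`-evident `C`-indicating event. -/
def superEvidentInd [Fintype Ω] [DecidableEq Ω] (μ : Ω → ℝ)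
    (part : Fin 2 → Ω → Finset Ω) (p : ℝ) (C E : Finset Ω) : Prop :=
  ∀ i : Fin 2, ∀ ω ∈ E, p < condP μ part i E ω ∧ p < condP μ part i C ω

/-- `E` is the largest super-evident `C`-indicating subset of `F`. -/
def isLargestSuperSub [Fintype Ω] [DecidableEq Ω] (μ : Ω → ℝ)
    (part : Fin 2 → Ω → Finset Ω) (C F E : Finset Ω) : Prop :=
  E ⊆ F ∧ ∃ p : ℝ, isEvidenceLevel μ part C F p ∧ superEvidentInd μ part p C E ∧
    ∀ G : Finset Ω, G ⊆ F → superEvidentInd μ part p C G → G ⊆ E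

/-!
The first maximum is `M := max_F min (P_i(F | ω), evidence values of F)` over the finitely many
events `F`. A `q`-evident `C`-indicating event `E` meeting `Π_i(ω)` at `ω'` satisfies
`q ≤ P_i(E | ω') = P_i(E | ω)`, so its evidence level is at most `M`. Conversely, an optimal `F`
meets `Π_i(ω)` at some `ω'` (or else `M = 0`); the largest `p`-evident `C`-indicating event, for `p`
the best evidence level of an event containing `ω'`, is then a maximally evident event meeting
`Π_i(ω)` whose level is at least `M`.
-/

section PerceivedCommonBelief

variable [Fintype Ω] [DecidableEq Ω] (μ : Ω → ℝ) (part : Fin 2 → Ω → Finset Ω)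

noncomputable def evidenceValues (C E : Finset Ω) : Finset ℝ :=
  (univ ×ˢ E).image fun x : Fin 2 × Ω => min (condP μ part x.1 E x.2) (condP μ part x.1 C x.2)

noncomputable def evidenceLevel (C E : Finset Ω) : ℝ :=
  if h : (evidenceValues μ part C E).Nonempty then (evidenceValues μ part C E).min' h else 0

noncomputable def perceivedLevel (C : Finset Ω) (i : Fin 2) (ω : Ω) (E : Finset Ω) : ℝ :=
  (insert (condP μ part i E ω) (evidenceValues μ part C E)).min' (insert_nonempty _ _)

open Classical in
noncomputable def largestInd (C : Finset Ω) (p : ℝ) : Finset Ω :=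
  ((univ : Finset (Finset Ω)).filter (pEvidentInd μ part p C)).sup id

variable {μ part}

theorem condP_nonneg (hμ : ∀ x, 0 ≤ μ x) (i : Fin 2) (E : Finset Ω) (ω : Ω) :
    0 ≤ condP μ part i E ω :=
  div_nonneg (sum_nonneg fun x _ => hμ x) (sum_nonneg fun x _ => hμ x)

theorem condP_le_one (hμ : ∀ x, 0 ≤ μ x) (i : Fin 2) (E : Finset Ω) (ω : Ω) :
    condP μ part i E ω ≤ 1 :=
  div_le_one_of_le₀ (sum_le_sum_of_subset_of_nonneg inter_subset_right fun x _ _ => hμ x)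
    (sum_nonneg fun x _ => hμ x)

theorem condP_mono (hμ : ∀ x, 0 ≤ μ x) (i : Fin 2) {E F : Finset Ω} (hEF : E ⊆ F) (ω : Ω) :
    condP μ part i E ω ≤ condP μ part i F ω :=
  div_le_div_of_nonneg_right
    (sum_le_sum_of_subset_of_nonneg (inter_subset_inter hEF Subset.rfl) fun x _ _ => hμ x)
    (sum_nonneg fun x _ => hμ x)

theorem condP_of_inter_eq_empty {i : Fin 2} {E : Finset Ω} {ω : Ω} (h : E ∩ part i ω = ∅) :
    condP μ part i E ω = 0 := by
  simp [condP, h]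

theorem condP_eq_of_mem_cell
    (hcell : ∀ (i : Fin 2) (ω ω' : Ω), ω' ∈ part i ω → part i ω' = part i ω)
    {i : Fin 2} (E : Finset Ω) {ω ω' : Ω} (h : ω' ∈ part i ω) :
    condP μ part i E ω' = condP μ part i E ω := by
  rw [condP, condP, hcell i ω ω' h]

theorem pEvidentInd_iff_forall_le_evidenceValues {p : ℝ} {C E : Finset Ω} :
    pEvidentInd μ part p C E ↔ ∀ r ∈ evidenceValues μ part C E, p ≤ r := by
  simp only [pEvidentInd, pEvident, evidenceValues, forall_mem_image, mem_product, mem_univ,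
    true_and, Prod.forall, le_min_iff]
  exact ⟨fun h j x hx => ⟨h.1 j x hx, h.2 j x hx⟩,
    fun h => ⟨fun j x hx => (h j x hx).1, fun j x hx => (h j x hx).2⟩⟩

theorem pEvidentInd_zero (hμ : ∀ x, 0 ≤ μ x) (C E : Finset Ω) : pEvidentInd μ part 0 C E :=
  ⟨fun j x _ => condP_nonneg hμ j E x, fun j x _ => condP_nonneg hμ j C x⟩

theorem isEvidenceLevel_evidenceLevel {C E : Finset Ω} (hE : E.Nonempty) :
    isEvidenceLevel μ part C E (evidenceLevel μ part C E) := by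
  have hne : (evidenceValues μ part C E).Nonempty := (univ_nonempty.product hE).image _
  rw [evidenceLevel, dif_pos hne, isEvidenceLevel]
  exact ⟨pEvidentInd_iff_forall_le_evidenceValues.2 fun r hr => min'_le _ _ hr,
    fun q hq => pEvidentInd_iff_forall_le_evidenceValues.1 hq _ (min'_mem _ hne)⟩

open Classical in
theorem isLargestInd_largestInd (hμ : ∀ x, 0 ≤ μ x) (C : Finset Ω) (p : ℝ) :
    isLargestInd μ part p C (largestInd μ part C p) := by
  have subset_largestInd {F : Finset Ω} (hF : pEvidentInd μ part p C F) :
      F ⊆ largestInd μ part C p :=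
    le_sup (f := id) (mem_filter.2 ⟨mem_univ F, hF⟩)
  refine ⟨⟨fun j x hx => ?_, fun j x hx => ?_⟩, fun F hF => subset_largestInd hF⟩ <;>
    obtain ⟨F, hF, hxF⟩ := mem_sup.1 hx <;>
    have hF := (mem_filter.1 hF).2
  · exact (hF.1 j x hxF).trans (condP_mono hμ j (subset_largestInd hF) x)
  · exact hF.2 j x hxF

theorem le_perceivedLevel_iff {C : Finset Ω} {i : Fin 2} {ω : Ω} {F : Finset Ω} {p : ℝ} :
    p ≤ perceivedLevel μ part C i ω F ↔
      pEvidentInd μ part p C F ∧ p ≤ condP μ part i F ω := by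
  rw [perceivedLevel, le_min'_iff, forall_mem_insert, pEvidentInd_iff_forall_le_evidenceValues,
    and_comm]

theorem perceivedLevel_le_evidenceLevel {C : Finset Ω} {i : Fin 2} {ω : Ω} {F : Finset Ω}
    (hF : F.Nonempty) : perceivedLevel μ part C i ω F ≤ evidenceLevel μ part C F :=
  (isEvidenceLevel_evidenceLevel hF).2 (le_perceivedLevel_iff.1 le_rfl).1

theorem le_perceivedLevel_of_inter_cell_nonempty
    (hcell : ∀ (i : Fin 2) (ω ω' : Ω), ω' ∈ part i ω → part i ω' = part i ω)
    {C E : Finset Ω} {i : Fin 2} {ω : Ω} {q : ℝ} (hq : pEvidentInd μ part q C E)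
    (hmeet : (E ∩ part i ω).Nonempty) : q ≤ perceivedLevel μ part C i ω E := by
  obtain ⟨ω', hω'⟩ := hmeet
  rw [mem_inter] at hω'
  refine le_perceivedLevel_iff.2 ⟨hq, ?_⟩
  rw [← condP_eq_of_mem_cell hcell E hω'.2]
  exact hq.1 i ω' hω'.1

theorem isGreatest_perceivedLevel (hμ : ∀ x, 0 ≤ μ x) {C : Finset Ω} {i : Fin 2} {ω : Ω}
    {F₁ : Finset Ω} (hF₁ : ∀ F, perceivedLevel μ part C i ω F ≤ perceivedLevel μ part C i ω F₁) :
    IsGreatest {p : ℝ | p ∈ Set.Icc (0 : ℝ) 1 ∧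
      ∃ F : Finset Ω, pEvidentInd μ part p C F ∧ p ≤ condP μ part i F ω}
      (perceivedLevel μ part C i ω F₁) := by
  have hF₁le := le_perceivedLevel_iff.1 (le_refl (perceivedLevel μ part C i ω F₁))
  have hnonneg : 0 ≤ perceivedLevel μ part C i ω F₁ :=
    le_perceivedLevel_iff.2 ⟨pEvidentInd_zero hμ C F₁, condP_nonneg hμ i F₁ ω⟩
  refine ⟨⟨⟨hnonneg, hF₁le.2.trans (condP_le_one hμ i F₁ ω)⟩, F₁, hF₁le⟩, ?_⟩
  rintro q ⟨-, F, hF⟩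
  exact (le_perceivedLevel_iff.2 hF).trans (hF₁ F)

/-- Unless its perceived level is `0`, `F` itself meets the cell of `ω`. -/
theorem exists_mem_cell_perceivedLevel_le_evidenceLevel (hμ : ∀ x, 0 ≤ μ x)
    (hmem : ∀ (i : Fin 2) (ω : Ω), ω ∈ part i ω) (C : Finset Ω) (i : Fin 2) (ω : Ω)
    (F : Finset Ω) :
    ∃ ω' ∈ part i ω, ∃ H : Finset Ω, ω' ∈ H ∧
      perceivedLevel μ part C i ω F ≤ evidenceLevel μ part C H := by
  by_cases hmeet : (F ∩ part i ω).Nonempty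
  · obtain ⟨ω', hω'⟩ := hmeet
    rw [mem_inter] at hω'
    exact ⟨ω', hω'.2, F, hω'.1, perceivedLevel_le_evidenceLevel ⟨ω', hω'.1⟩⟩
  · have hzero : perceivedLevel μ part C i ω F ≤ 0 :=
      condP_of_inter_eq_empty (not_nonempty_iff_eq_empty.1 hmeet) ▸
        (le_perceivedLevel_iff.1 le_rfl).2
    refine ⟨ω, hmem i ω, univ, mem_univ ω, hzero.trans ?_⟩
    exact (isEvidenceLevel_evidenceLevel ⟨ω, mem_univ ω⟩).2 (pEvidentInd_zero hμ C univ)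

/-- The maximally evident superset of `F₀` is the largest `p`-evident `C`-indicating event, for
`p` the best evidence level of a superset of `F₀`. -/
theorem exists_isMaxEvidentSup (hμ : ∀ x, 0 ≤ μ x) (C : Finset Ω) {F₀ : Finset Ω}
    (hF₀ : F₀.Nonempty) : ∃ E : Finset Ω, isMaxEvidentSup μ part C F₀ E := by
  obtain ⟨H₀, hH₀, hmax⟩ := exists_max_image (univ.filter (F₀ ⊆ ·)) (evidenceLevel μ part C)
    ⟨F₀, mem_filter.2 ⟨mem_univ _, Subset.rfl⟩⟩
  set p := evidenceLevel μ part C H₀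
  have hbound : ∀ H : Finset Ω, F₀ ⊆ H → ∀ r, isEvidenceLevel μ part C H r → r ≤ p :=
    fun H hH r hr => (hr.unique (isEvidenceLevel_evidenceLevel (hF₀.mono hH))).trans_le
      (hmax H (mem_filter.2 ⟨mem_univ _, hH⟩))
  have hH₀p : pEvidentInd μ part p C H₀ :=
    (isEvidenceLevel_evidenceLevel (hF₀.mono (mem_filter.1 hH₀).2)).1
  have hE := isLargestInd_largestInd (μ := μ) (part := part) hμ C p
  have hF₀E : F₀ ⊆ largestInd μ part C p := (mem_filter.1 hH₀).2.trans (hE.2 H₀ hH₀p)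
  have hlevel : isEvidenceLevel μ part C (largestInd μ part C p) p :=
    ⟨hE.1, fun q hq => ((isEvidenceLevel_evidenceLevel (hF₀.mono hF₀E)).2 hq).trans
      (hbound _ hF₀E _ (isEvidenceLevel_evidenceLevel (hF₀.mono hF₀E)))⟩
  exact ⟨_, hF₀E, p, hlevel, hE, hbound⟩

end PerceivedCommonBelief

theorem maximal_perceived_common_pBelief_general [Fintype Ω] [DecidableEq Ω]
    (μ : Ω → ℝ) (part : Fin 2 → Ω → Finset Ω)
    (hμpos : ∀ ω : Ω, 0 < μ ω)
    (hmem : ∀ (i : Fin 2) (ω : Ω), ω ∈ part i ω)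
    (hcell : ∀ (i : Fin 2) (ω ω' : Ω), ω' ∈ part i ω → part i ω' = part i ω)
    (C : Finset Ω) (i : Fin 2) (ω : Ω) :
    ∃ m : ℝ,
      IsGreatest {p : ℝ | p ∈ Set.Icc (0 : ℝ) 1 ∧
        ∃ F : Finset Ω, pEvidentInd μ part p C F ∧ p ≤ condP μ part i F ω} m ∧
      IsGreatest {q : ℝ | ∃ E : Finset Ω, isMaxEvident μ part C E ∧
        (E ∩ part i ω).Nonempty ∧ isEvidenceLevel μ part C E q} m := by
  have hμ : ∀ x, 0 ≤ μ x := fun x => (hμpos x).le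
  obtain ⟨F₁, -, hF₁max⟩ := exists_max_image univ (perceivedLevel μ part C i ω) univ_nonempty
  set M := perceivedLevel μ part C i ω F₁
  have hF₁ F : perceivedLevel μ part C i ω F ≤ M := hF₁max F (mem_univ F)
  have hupper {E : Finset Ω} {q : ℝ} (hq : pEvidentInd μ part q C E)
      (hmeet : (E ∩ part i ω).Nonempty) : q ≤ M :=
    (le_perceivedLevel_of_inter_cell_nonempty hcell hq hmeet).trans (hF₁ E)
  obtain ⟨ω', hω'cell, H, hω'H, hH⟩ :=
    exists_mem_cell_perceivedLevel_le_evidenceLevel hμ hmem C i ω F₁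
  obtain ⟨E, hω'E, p, hlevel, hlargest, hbound⟩ :=
    exists_isMaxEvidentSup (part := part) hμ C (singleton_nonempty ω')
  have hmeet : (E ∩ part i ω).Nonempty := ⟨ω', mem_inter.2 ⟨singleton_subset_iff.1 hω'E, hω'cell⟩⟩
  have hp : p = M :=
    le_antisymm (hupper hlevel.1 hmeet) <| hH.trans <|
      hbound H (singleton_subset_iff.2 hω'H) _ (isEvidenceLevel_evidenceLevel ⟨ω', hω'H⟩)
  have hmaxEvident : isMaxEvident μ part C E :=
    ⟨{ω'}, singleton_nonempty ω', hω'E, p, hlevel, hlargest, hbound⟩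
  refine ⟨M, isGreatest_perceivedLevel hμ hF₁, ⟨E, hmaxEvident, hmeet, hp ▸ hlevel⟩, ?_⟩
  rintro q ⟨E, -, hmeet, hq⟩
  exact hupper hq.1 hmeet

/-- The set of `p ∈ [0,1]` such that player `i` `p`-believes some `p`-evident
`C`-indicating event at `ω` has a maximum, and this maximum equals the maximum of the
`C`-evidence levels of the maximally evident `C`-indicating events meeting the cell of
`ω`. -/
theorem maximal_perceived_common_pBelief [Fintype Ω] [DecidableEq Ω] [Nonempty Ω]
    (μ : Ω → ℝ) (part : Fin 2 → Ω → Finset Ω)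
    (hμpos : ∀ ω : Ω, 0 < μ ω) (hμsum : ∑ ω : Ω, μ ω = 1)
    (hmem : ∀ (i : Fin 2) (ω : Ω), ω ∈ part i ω)
    (hcell : ∀ (i : Fin 2) (ω ω' : Ω), ω' ∈ part i ω → part i ω' = part i ω)
    (C : Finset Ω) (i : Fin 2) (ω : Ω) :
    ∃ m : ℝ,
      IsGreatest {p : ℝ | p ∈ Set.Icc (0 : ℝ) 1 ∧
        ∃ F : Finset Ω, pEvidentInd μ part p C F ∧ p ≤ condP μ part i F ω} m ∧
      IsGreatest {q : ℝ | ∃ E : Finset Ω, isMaxEvident μ part C E ∧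
        (E ∩ part i ω).Nonempty ∧ isEvidenceLevel μ part C E q} m :=
  maximal_perceived_common_pBelief_general μ part hμpos hmem hcell C i ω
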